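/- arXiv:2107.07176 — 2 statements merged into one kernel-verified Lean document; each statement's English description precedes it below -/
import Mathlib

section
/- (Main theorem, T-asymptotic regularity under (C2_q)) In the Tikhonov-Mann setting, assume: β_n > 0 for all n; σ₂ : ℕ → ℕ is a rate of convergence towards 0 of P_n = ∏_{i=0}^{n} β_{i+1}; σ₃ is a Cauchy modulus for ∑ |β_{n+1}−β_n|; σ₄ is a Cauchy modulus for ∑ |λ_{n+1}−λ_n|; K ∈ ℕ satisfies K ≥ M; σ₅ : ℕ → ℕ is a rate of convergence of (β_n) towards 1; Λ ∈ ℕ, Λ ≥ 1, and N_Λ ∈ ℕ are such that λ_n ≥ 1/Λ for all n ≥ N_Λ. Define χ(k) = max{σ₃(8K(k+1)−1), σ₄(8K(k+1)−1)}, suppose ψ₀ : ℕ → ℕ takes positive values with 1/ψ₀(k) ≤ P_{χ(3k+2)} for all k, and set Σ̃(k) = max{σ₂(6K(k+1)ψ₀(k)−1), χ(3k+2)+1} + 1. Then Φ̃(k) = max{N_Λ, Σ̃(2Λ(k+1)−1), σ₅(4KΛ(k+1)−1)} is a rate of T-asymptotic regularity for (x_n), i.e., d(x_n,Tx_n) ≤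 1/(k+1) for all k ∈ ℕ and all n ≥ Φ̃(k). -/
/-!
The successive distances `aₙ = d(xₙ₊₁, xₙ)` satisfy
`aₙ₊₁ ≤ βₙ₊₁ aₙ + 2K (|βₙ₊₁ - βₙ| + |λₙ₊₁ - λₙ|)`. Unrolling this from `m = χ(3k+2)+1` to `n`,
the product `∏_{m ≤ i < n} βᵢ₊₁ = Pₙ₋₁ / Pₘ₋₁` is small because `Pₘ₋₁ ≥ 1/ψ₀(k)` while `Pₙ₋₁ → 0`,
and the remaining sum is small by the Cauchy moduli; this gives a rate for `d(xₙ₊₁, xₙ) → 0`.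
Finally `λₙ d(xₙ, T xₙ) ≤ d(xₙ₊₁, xₙ) + d(xₙ, yₙ)` with `d(xₙ, yₙ) ≤ 2K (1 - βₙ)`, and `λₙ ≥ 1/Λ`.
-/

/-- A `W`-hyperbolic space: a metric space together with a convexity mapping
`W x y l` (written `(1-l)x + l y` in the paper) satisfying (W1)-(W4). -/
structure WHyp (X : Type*) [MetricSpace X] where
  W : X → X → ℝ → X
  W1 : ∀ x y z : X, ∀ l ∈ Set.Icc (0:ℝ) 1,
    dist z (W x y l) ≤ (1 - l) * dist z x + l * dist z y
  W2 : ∀ x y : X, ∀ l ∈ Set.Icc (0:ℝ) 1, ∀ l' ∈ Set.Icc (0:ℝ) 1,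
    dist (W x y l) (W x y l') = |l - l'| * dist x y
  W3 : ∀ x y : X, ∀ l ∈ Set.Icc (0:ℝ) 1, W x y l = W y x (1 - l)
  W4 : ∀ x y z w : X, ∀ l ∈ Set.Icc (0:ℝ) 1,
    dist (W x z l) (W y w l) ≤ (1 - l) * dist x y + l * dist z w

namespace WHyp

variable {X : Type*} [MetricSpace X] (H : WHyp X)

theorem dist_W_le_right (x y : X) {l : ℝ} (hl : l ∈ Set.Icc (0:ℝ) 1) :
    dist y (H.W x y l) ≤ (1 - l) * dist y x := by
  simpa using H.W1 x y y l hl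

theorem dist_W_le_of_le {x y p : X} {r l : ℝ} (hl : l ∈ Set.Icc (0:ℝ) 1)
    (hx : dist x p ≤ r) (hy : dist y p ≤ r) : dist (H.W x y l) p ≤ r := by
  have h1 : 0 ≤ 1 - l := sub_nonneg.2 hl.2
  rw [dist_comm]
  calc dist p (H.W x y l) ≤ (1 - l) * dist x p + l * dist y p := by
        simpa only [dist_comm p] using H.W1 x y p l hl
    _ ≤ (1 - l) * r + l * r := by gcongr; exact hl.1
    _ = r := by ring

theorem dist_W_W_le (x y z w : X) {l l' : ℝ} (hl : l ∈ Set.Icc (0:ℝ) 1)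
    (hl' : l' ∈ Set.Icc (0:ℝ) 1) :
    dist (H.W x z l) (H.W y w l') ≤ (1 - l) * dist x y + l * dist z w + |l - l'| * dist y w :=
  (dist_triangle _ (H.W y w l) _).trans (add_le_add (H.W4 x y z w l hl) (H.W2 y w l hl l' hl').le)

end WHyp

theorem le_prod_mul_add_sum_of_le_mul_add {R : Type*} [CommRing R] [LinearOrder R]
    [IsStrictOrderedRing R] {a b c : ℕ → R} (hb : ∀ n, b n ∈ Set.Icc (0:R) 1)
    (hc : ∀ n, 0 ≤ c n) (h : ∀ n, a (n + 1) ≤ b n * a n + c n) {m n : ℕ} (hmn : m ≤ n) :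
    a n ≤ (∏ i ∈ Finset.Ico m n, b i) * a m + ∑ i ∈ Finset.Ico m n, c i := by
  induction n, hmn using Nat.le_induction with
  | base => simp
  | succ n hmn ih =>
    rw [Finset.prod_Ico_succ_top hmn, Finset.sum_Ico_succ_top hmn]
    have hS : 0 ≤ ∑ i ∈ Finset.Ico m n, c i := Finset.sum_nonneg fun i _ => hc i
    calc a (n + 1) ≤ b n * a n + c n := h n
      _ ≤ b n * ((∏ i ∈ Finset.Ico m n, b i) * a m + ∑ i ∈ Finset.Ico m n, c i) + c n := by
        gcongr; exact (hb n).1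
      _ ≤ _ := by linarith [mul_le_of_le_one_left hS (hb n).2]

theorem Finset.prod_Ico_le_div_of_le_prod_range {R : Type*} [Field R] [LinearOrder R]
    [IsStrictOrderedRing R] {f : ℕ → R} (hf : ∀ i, 0 ≤ f i) {m n : ℕ} (hmn : m ≤ n) {c : R}
    (hc : 0 < c) (hcm : c ≤ ∏ i ∈ Finset.range m, f i) :
    ∏ i ∈ Finset.Ico m n, f i ≤ (∏ i ∈ Finset.range n, f i) / c := by
  rw [le_div_iff₀ hc, ← Finset.prod_range_mul_prod_Ico f hmn, mul_comm]
  exact mul_le_mul_of_nonneg_right hcm (Finset.prod_nonneg fun i _ => hf i)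

theorem Finset.sum_Ico_succ_le_of_forall_sum_Icc_le {M : Type*} [AddCommMonoid M] [LE M]
    {b : ℕ → M} {N : ℕ} {ε : M} (h : ∀ q : ℕ, ∑ i ∈ Finset.Icc (N + 1) (N + q), b i ≤ ε)
    (n : ℕ) : ∑ i ∈ Finset.Ico (N + 1) n, b i ≤ ε := by
  have hIco : Finset.Ico (N + 1) n = Finset.Icc (N + 1) (N + (n - 1 - N)) := by
    ext i; simp only [Finset.mem_Ico, Finset.mem_Icc]; omega
  rw [hIco]
  exact h _

theorem one_div_natCast_pred_add_one {N : ℕ} (hN : 0 < N) :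
    1 / (((N - 1 : ℕ) : ℝ) + 1) = 1 / (N : ℝ) := by
  rw [Nat.cast_pred hN, sub_add_cancel]

structure IsTikhonovMann {X : Type*} [MetricSpace X] (H : WHyp X) (C : Set X) (T : X → X)
    (p u : X) (lam beta : ℕ → ℝ) (x y : ℕ → X) : Prop where
  convex : ∀ a ∈ C, ∀ b ∈ C, ∀ l ∈ Set.Icc (0:ℝ) 1, H.W a b l ∈ C
  mapsTo : ∀ a ∈ C, T a ∈ C
  nonexpansive : ∀ a ∈ C, ∀ b ∈ C, dist (T a) (T b) ≤ dist a b
  fixed_mem : p ∈ C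
  isFixedPt : T p = p
  anchor_mem : u ∈ C
  lam_mem : ∀ n, lam n ∈ Set.Icc (0:ℝ) 1
  beta_mem : ∀ n, beta n ∈ Set.Icc (0:ℝ) 1
  start_mem : x 0 ∈ C
  y_eq : ∀ n, y n = H.W u (x n) (beta n)
  x_succ : ∀ n, x (n + 1) = H.W (y n) (T (y n)) (lam n)

namespace IsTikhonovMann

variable {X : Type*} [MetricSpace X] {H : WHyp X} {C : Set X} {T : X → X} {p u : X}
  {lam beta : ℕ → ℝ} {x y : ℕ → X} (h : IsTikhonovMann H C T p u lam beta x y)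
include h

theorem y_mem_of_x_mem {n : ℕ} (hxn : x n ∈ C) : y n ∈ C :=
  h.y_eq n ▸ h.convex u h.anchor_mem _ hxn _ (h.beta_mem n)

theorem x_mem (n : ℕ) : x n ∈ C := by
  induction n with
  | zero => exact h.start_mem
  | succ n ih =>
    have hyn := h.y_mem_of_x_mem ih
    exact h.x_succ n ▸ h.convex _ hyn _ (h.mapsTo _ hyn) _ (h.lam_mem n)

theorem y_mem (n : ℕ) : y n ∈ C := h.y_mem_of_x_mem (h.x_mem n)

theorem dist_T_le {a : X} (ha : a ∈ C) : dist (T a) p ≤ dist a p := by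
  simpa only [h.isFixedPt] using h.nonexpansive a ha p h.fixed_mem

theorem lam_mul_dist_le (n : ℕ) :
    lam n * dist (x n) (T (x n)) ≤ dist (x (n + 1)) (x n) + dist (x n) (y n) := by
  have hl := h.lam_mem n
  have hW : dist (T (x n)) (x (n + 1)) ≤
      (1 - lam n) * dist (T (x n)) (y n) + lam n * dist (T (x n)) (T (y n)) :=
    h.x_succ n ▸ H.W1 _ _ _ _ hl
  have hTy : dist (T (x n)) (y n) ≤ dist (x n) (T (x n)) + dist (x n) (y n) := by
    linarith [dist_triangle (T (x n)) (x n) (y n), dist_comm (T (x n)) (x n)]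
  have hTT := h.nonexpansive _ (h.x_mem n) _ (h.y_mem n)
  nlinarith [dist_triangle (x n) (x (n + 1)) (T (x n)), dist_comm (x n) (x (n + 1)),
    dist_comm (x (n + 1)) (T (x n)), mul_le_mul_of_nonneg_left hTy (sub_nonneg.2 hl.2),
    mul_le_mul_of_nonneg_left hTT hl.1]

section

variable {r : ℝ} (h0 : dist (x 0) p ≤ r) (hu : dist u p ≤ r)
include h0 hu

theorem dist_x_le (n : ℕ) : dist (x n) p ≤ r := by
  induction n with
  | zero => exact h0
  | succ n ih =>
    have hyn : dist (y n) p ≤ r := h.y_eq n ▸ H.dist_W_le_of_le (h.beta_mem n) hu ih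
    rw [h.x_succ n]
    exact H.dist_W_le_of_le (h.lam_mem n) hyn ((h.dist_T_le (h.y_mem n)).trans hyn)

theorem dist_y_le (n : ℕ) : dist (y n) p ≤ r :=
  h.y_eq n ▸ H.dist_W_le_of_le (h.beta_mem n) hu (h.dist_x_le h0 hu n)

theorem dist_x_y_le (n : ℕ) : dist (x n) (y n) ≤ 2 * r * (1 - beta n) := by
  have hux : dist (x n) u ≤ 2 * r := by
    linarith [dist_triangle_right (x n) u p, h.dist_x_le h0 hu n]
  calc dist (x n) (y n) ≤ (1 - beta n) * dist (x n) u :=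
        h.y_eq n ▸ H.dist_W_le_right _ _ (h.beta_mem n)
    _ ≤ (1 - beta n) * (2 * r) := by gcongr; linarith [(h.beta_mem n).2]
    _ = 2 * r * (1 - beta n) := by ring

theorem dist_succ_succ_le (n : ℕ) :
    dist (x (n + 2)) (x (n + 1)) ≤ beta (n + 1) * dist (x (n + 1)) (x n) +
      2 * r * (|beta (n + 1) - beta n| + |lam (n + 1) - lam n|) := by
  have hb := h.beta_mem (n + 1)
  have hl := h.lam_mem (n + 1)
  have hux : dist u (x n) ≤ 2 * r := by
    linarith [dist_triangle_right u (x n) p, h.dist_x_le h0 hu n]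
  have hyT : dist (y n) (T (y n)) ≤ 2 * r := by
    linarith [dist_triangle_right (y n) (T (y n)) p, h.dist_y_le h0 hu n,
      h.dist_T_le (h.y_mem n)]
  have hyy : dist (y (n + 1)) (y n) ≤
      beta (n + 1) * dist (x (n + 1)) (x n) + |beta (n + 1) - beta n| * (2 * r) := by
    have := H.dist_W_W_le u u (x (n + 1)) (x n) hb (h.beta_mem n)
    rw [← h.y_eq, ← h.y_eq, dist_self, mul_zero, zero_add] at this
    linarith [mul_le_mul_of_nonneg_left hux (abs_nonneg (beta (n + 1) - beta n))]
  have hTyy := h.nonexpansive _ (h.y_mem (n + 1)) _ (h.y_mem n)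
  have hxx := H.dist_W_W_le (y (n + 1)) (y n) (T (y (n + 1))) (T (y n)) hl (h.lam_mem n)
  rw [← h.x_succ, ← h.x_succ] at hxx
  nlinarith [mul_le_mul_of_nonneg_left hTyy hl.1,
    mul_le_mul_of_nonneg_left hyT (abs_nonneg (lam (n + 1) - lam n))]

end

theorem dist_succ_le_of_moduli {K : ℕ} (hK : 0 < K) (h0 : dist (x 0) p ≤ K)
    (hu : dist u p ≤ K) {σ₂ σ₃ σ₄ : ℕ → ℕ}
    (hσ₂ : ∀ k : ℕ, ∀ n ≥ σ₂ k,
      |∏ i ∈ Finset.range (n + 1), beta (i + 1)| ≤ 1 / (k + 1))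
    (hσ₃ : ∀ k : ℕ, ∀ n ≥ σ₃ k, ∀ q : ℕ,
      ∑ i ∈ Finset.Icc (n + 1) (n + q), |beta (i + 1) - beta i| ≤ 1 / (k + 1))
    (hσ₄ : ∀ k : ℕ, ∀ n ≥ σ₄ k, ∀ q : ℕ,
      ∑ i ∈ Finset.Icc (n + 1) (n + q), |lam (i + 1) - lam i| ≤ 1 / (k + 1))
    {k N ψ n : ℕ} (hψ : 0 < ψ)
    (hψN : 1 / (ψ : ℝ) ≤ ∏ i ∈ Finset.range (N + 1), beta (i + 1))
    (hN : max (σ₃ (8 * K * (3 * k + 2 + 1) - 1)) (σ₄ (8 * K * (3 * k + 2 + 1) - 1)) ≤ N)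
    (hn : max (σ₂ (6 * K * (k + 1) * ψ - 1)) (N + 1) + 1 ≤ n) :
    dist (x (n + 1)) (x n) ≤ 1 / (k + 1) := by
  have hKR : (0:ℝ) < K := by exact_mod_cast hK
  have hψR : (0:ℝ) < ψ := by exact_mod_cast hψ
  have hβ0 : ∀ i, 0 ≤ beta (i + 1) := fun i => (h.beta_mem (i + 1)).1
  have hunroll := le_prod_mul_add_sum_of_le_mul_add (a := fun n => dist (x (n + 1)) (x n))
    (fun i => h.beta_mem (i + 1)) (fun i => by positivity) (h.dist_succ_succ_le h0 hu)
    (m := N + 1) (n := n) (by omega)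
  have hPn := hσ₂ (6 * K * (k + 1) * ψ - 1) (n - 1) (by omega)
  rw [Nat.sub_add_cancel (by omega), abs_of_nonneg (Finset.prod_nonneg fun i _ => hβ0 i),
    one_div_natCast_pred_add_one (by positivity)] at hPn
  have hprod : ∏ i ∈ Finset.Ico (N + 1) n, beta (i + 1) ≤ 1 / (6 * K * (k + 1)) :=
    calc ∏ i ∈ Finset.Ico (N + 1) n, beta (i + 1)
        ≤ (∏ i ∈ Finset.range n, beta (i + 1)) / (1 / ψ) :=
          Finset.prod_Ico_le_div_of_le_prod_range hβ0 (by omega) (by positivity) hψN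
      _ ≤ 1 / ((6 * K * (k + 1) * ψ : ℕ) : ℝ) / (1 / ψ) := by gcongr
      _ = 1 / (6 * K * (k + 1)) := by push_cast; field_simp
  have hsβ := Finset.sum_Ico_succ_le_of_forall_sum_Icc_le (hσ₃ _ N (le_of_max_le_left hN)) n
  have hsl := Finset.sum_Ico_succ_le_of_forall_sum_Icc_le (hσ₄ _ N (le_of_max_le_right hN)) n
  rw [one_div_natCast_pred_add_one (by positivity)] at hsβ hsl
  push_cast at hsβ hsl
  have hfirst : dist (x (N + 1 + 1)) (x (N + 1)) ≤ 2 * K := by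
    linarith [dist_triangle_right (x (N + 1 + 1)) (x (N + 1)) p, h.dist_x_le h0 hu (N + 1 + 1),
      h.dist_x_le h0 hu (N + 1)]
  rw [← Finset.mul_sum, Finset.sum_add_distrib] at hunroll
  calc dist (x (n + 1)) (x n)
      ≤ 1 / (6 * K * (k + 1)) * (2 * K) +
          2 * K * (1 / (8 * K * (3 * k + 2 + 1)) + 1 / (8 * K * (3 * k + 2 + 1))) := by
        refine hunroll.trans ?_
        gcongr
    _ ≤ 1 / (k + 1) := by
        field_simp
        linarith

end IsTikhonovMann

theorem tm_T_as_reg_C2q_general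
    {X : Type*} [MetricSpace X] (H : WHyp X) (C : Set X)
    (hCconv : ∀ x ∈ C, ∀ y ∈ C, ∀ l ∈ Set.Icc (0:ℝ) 1, H.W x y l ∈ C)
    (T : X → X) (hTmaps : ∀ x ∈ C, T x ∈ C)
    (hTne : ∀ x ∈ C, ∀ y ∈ C, dist (T x) (T y) ≤ dist x y)
    (p : X) (hpC : p ∈ C) (hpfix : T p = p)
    (u : X) (huC : u ∈ C)
    (lam beta : ℕ → ℝ)
    (hlam : ∀ n, lam n ∈ Set.Icc (0:ℝ) 1) (hbeta : ∀ n, beta n ∈ Set.Icc (0:ℝ) 1)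
    (x y : ℕ → X) (hx0 : x 0 ∈ C)
    (hy : ∀ n, y n = H.W u (x n) (beta n))
    (hx : ∀ n, x (n + 1) = H.W (y n) (T (y n)) (lam n))
    (M : ℝ) (hM : M = max (dist (x 0) p) (dist u p))
    (σ₂ σ₃ σ₄ σ₅ : ℕ → ℕ)
    (hσ₂ : ∀ k : ℕ, ∀ n ≥ σ₂ k,
      |∏ i ∈ Finset.range (n + 1), beta (i + 1)| ≤ 1 / (k + 1))
    (hσ₃ : ∀ k : ℕ, ∀ n ≥ σ₃ k, ∀ q : ℕ,
      ∑ i ∈ Finset.Icc (n + 1) (n + q), |beta (i + 1) - beta i| ≤ 1 / (k + 1))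
    (hσ₄ : ∀ k : ℕ, ∀ n ≥ σ₄ k, ∀ q : ℕ,
      ∑ i ∈ Finset.Icc (n + 1) (n + q), |lam (i + 1) - lam i| ≤ 1 / (k + 1))
    (K : ℕ) (hK : M ≤ (K : ℝ))
    (hσ₅ : ∀ k : ℕ, ∀ n ≥ σ₅ k, |beta n - 1| ≤ 1 / (k + 1))
    (Λ : ℕ) (hΛ : 1 ≤ Λ) (NΛ : ℕ)
    (hNΛ : ∀ n ≥ NΛ, 1 / (Λ : ℝ) ≤ lam n)
    (χ : ℕ → ℕ)
    (hχ : ∀ k : ℕ, χ k = max (σ₃ (8 * K * (k + 1) - 1)) (σ₄ (8 * K * (k + 1) - 1)))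
    (ψ₀ : ℕ → ℕ) (hψ₀pos : ∀ k, 0 < ψ₀ k)
    (hψ₀ : ∀ k : ℕ, 1 / (ψ₀ k : ℝ) ≤ ∏ i ∈ Finset.range (χ (3 * k + 2) + 1), beta (i + 1))
    (Sg : ℕ → ℕ)
    (hSg : ∀ k : ℕ,
      Sg k = max (σ₂ (6 * K * (k + 1) * ψ₀ k - 1)) (χ (3 * k + 2) + 1) + 1)
    (Φ : ℕ → ℕ)
    (hΦ : ∀ k : ℕ,
      Φ k = max NΛ (max (Sg (2 * Λ * (k + 1) - 1)) (σ₅ (4 * K * Λ * (k + 1) - 1)))) :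
    ∀ k : ℕ, ∀ n ≥ Φ k, dist (x n) (T (x n)) ≤ 1 / (k + 1) := by
  intro k n hn
  have hTM : IsTikhonovMann H C T p u lam beta x y :=
    ⟨hCconv, hTmaps, hTne, hpC, hpfix, huC, hlam, hbeta, hx0, hy, hx⟩
  have h0 : dist (x 0) p ≤ K := (hM ▸ le_max_left _ _ : dist (x 0) p ≤ M).trans hK
  have hu : dist u p ≤ K := (hM ▸ le_max_right _ _ : dist u p ≤ M).trans hK
  rw [hΦ, ge_iff_le, max_le_iff, max_le_iff] at hn
  obtain ⟨hnΛ, hnS, hn₅⟩ := hn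
  rcases K.eq_zero_or_pos with rfl | hK0
  · have hxn : x n = p := dist_le_zero.1 (by exact_mod_cast hTM.dist_x_le h0 hu n)
    rw [hxn, hpfix, dist_self]
    positivity
  have hstep := hTM.dist_succ_le_of_moduli hK0 h0 hu hσ₂ hσ₃ hσ₄ (hψ₀pos _) (hψ₀ _)
    (hχ _).ge (hSg _ ▸ hnS)
  have hβn := hσ₅ _ n hn₅
  rw [one_div_natCast_pred_add_one (by positivity)] at hstep hβn
  push_cast at hstep hβn
  have hΛR : (0:ℝ) < Λ := by exact_mod_cast hΛ
  have hKR : (0:ℝ) < K := by exact_mod_cast hK0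
  calc dist (x n) (T (x n)) = Λ * (1 / Λ * dist (x n) (T (x n))) := by field_simp
    _ ≤ Λ * (lam n * dist (x n) (T (x n))) := by gcongr; exact hNΛ n hnΛ
    _ ≤ Λ * (dist (x (n + 1)) (x n) + 2 * K * (1 - beta n)) := by
        gcongr
        exact (hTM.lam_mul_dist_le n).trans (add_le_add_right (hTM.dist_x_y_le h0 hu n) _)
    _ ≤ Λ * (1 / (2 * Λ * (k + 1)) + 2 * K * (1 / (4 * K * Λ * (k + 1)))) := by
        gcongr
        exact (le_abs_self _).trans ((abs_sub_comm _ _).trans_le hβn)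
    _ = 1 / (k + 1) := by field_simp; ring

theorem tm_T_as_reg_C2q
    {X : Type*} [MetricSpace X] (H : WHyp X) (C : Set X)
    (hCconv : ∀ x ∈ C, ∀ y ∈ C, ∀ l ∈ Set.Icc (0:ℝ) 1, H.W x y l ∈ C)
    (T : X → X) (hTmaps : ∀ x ∈ C, T x ∈ C)
    (hTne : ∀ x ∈ C, ∀ y ∈ C, dist (T x) (T y) ≤ dist x y)
    (p : X) (hpC : p ∈ C) (hpfix : T p = p)
    (u : X) (huC : u ∈ C)
    (lam beta : ℕ → ℝ)
    (hlam : ∀ n, lam n ∈ Set.Icc (0:ℝ) 1) (hbeta : ∀ n, beta n ∈ Set.Icc (0:ℝ) 1)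
    (x y : ℕ → X) (hx0 : x 0 ∈ C)
    (hy : ∀ n, y n = H.W u (x n) (beta n))
    (hx : ∀ n, x (n + 1) = H.W (y n) (T (y n)) (lam n))
    (M : ℝ) (hM : M = max (dist (x 0) p) (dist u p))
    (hbpos : ∀ n, 0 < beta n)
    (σ₂ σ₃ σ₄ σ₅ : ℕ → ℕ)
    (hσ₂ : ∀ k : ℕ, ∀ n ≥ σ₂ k,
      |∏ i ∈ Finset.range (n + 1), beta (i + 1)| ≤ 1 / (k + 1))
    (hσ₃ : ∀ k : ℕ, ∀ n ≥ σ₃ k, ∀ q : ℕ,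
      ∑ i ∈ Finset.Icc (n + 1) (n + q), |beta (i + 1) - beta i| ≤ 1 / (k + 1))
    (hσ₄ : ∀ k : ℕ, ∀ n ≥ σ₄ k, ∀ q : ℕ,
      ∑ i ∈ Finset.Icc (n + 1) (n + q), |lam (i + 1) - lam i| ≤ 1 / (k + 1))
    (K : ℕ) (hK : M ≤ (K : ℝ))
    (hσ₅ : ∀ k : ℕ, ∀ n ≥ σ₅ k, |beta n - 1| ≤ 1 / (k + 1))
    (Λ : ℕ) (hΛ : 1 ≤ Λ) (NΛ : ℕ)
    (hNΛ : ∀ n ≥ NΛ, 1 / (Λ : ℝ) ≤ lam n)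
    (χ : ℕ → ℕ)
    (hχ : ∀ k : ℕ, χ k = max (σ₃ (8 * K * (k + 1) - 1)) (σ₄ (8 * K * (k + 1) - 1)))
    (ψ₀ : ℕ → ℕ) (hψ₀pos : ∀ k, 0 < ψ₀ k)
    (hψ₀ : ∀ k : ℕ, 1 / (ψ₀ k : ℝ) ≤ ∏ i ∈ Finset.range (χ (3 * k + 2) + 1), beta (i + 1))
    (Sg : ℕ → ℕ)
    (hSg : ∀ k : ℕ,
      Sg k = max (σ₂ (6 * K * (k + 1) * ψ₀ k - 1)) (χ (3 * k + 2) + 1) + 1)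
    (Φ : ℕ → ℕ)
    (hΦ : ∀ k : ℕ,
      Φ k = max NΛ (max (Sg (2 * Λ * (k + 1) - 1)) (σ₅ (4 * K * Λ * (k + 1) - 1)))) :
    ∀ k : ℕ, ∀ n ≥ Φ k, dist (x n) (T (x n)) ≤ 1 / (k + 1) :=
  tm_T_as_reg_C2q_general H C hCconv T hTmaps hTne p hpC hpfix u huC lam beta hlam hbeta x y hx0 hy
    hx M hM σ₂ σ₃ σ₄ σ₅ hσ₂ hσ₃ hσ₄ K hK hσ₅ Λ hΛ NΛ hNΛ χ hχ ψ₀ hψ₀pos hψ₀ Sg hSg Φ hΦ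
end

section
/- (From asymptotic regularity to T-asymptotic regularity) In the Tikhonov-Mann setting, assume: K ∈ ℕ satisfies K ≥ M; σ₅ : ℕ → ℕ is a rate of convergence of (β_n) towards 1; Λ ∈ ℕ, Λ ≥ 1, and N_Λ ∈ ℕ are such that λ_n ≥ 1/Λ for all n ≥ N_Λ; and Θ : ℕ → ℕ is a rate of asymptotic regularity for (x_n). Then Θ*(k) = max{N_Λ, Θ(2Λ(k+1)−1), σ₅(4KΛ(k+1)−1)} is a rate of T-asymptotic regularity for (x_n), i.e., d(x_n,Tx_n) ≤ 1/(k+1) for all k ∈ ℕ and all n ≥ Θ*(k). -/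
lemma le_one_div_of_rate {φ : ℕ → ℕ} {a : ℕ → ℝ} (h : ∀ k, ∀ n ≥ φ k, a n ≤ 1 / (k + 1))
    {m n : ℕ} (hm : 0 < m) (hn : φ (m - 1) ≤ n) : a n ≤ 1 / m := by
  simpa [Nat.cast_pred hm] using h (m - 1) n hn

lemma mul_le_one_div_of_rate {φ : ℕ → ℕ} {a : ℕ → ℝ} (h : ∀ k, ∀ n ≥ φ k, a n ≤ 1 / (k + 1))
    {c m n : ℕ} (hm : 0 < m) (hn : φ (c * m - 1) ≤ n) : c * a n ≤ 1 / m := by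
  rcases c.eq_zero_or_pos with rfl | hc
  · simp only [CharP.cast_eq_zero, zero_mul]; positivity
  calc c * a n ≤ c * (1 / (c * m : ℕ)) := by gcongr; exact le_one_div_of_rate h (by positivity) hn
    _ = 1 / m := by push_cast; field_simp

namespace WHyp

variable {X : Type*} [MetricSpace X] (H : WHyp X)

lemma dist_W_le_max (x y z : X) {l : ℝ} (hl : l ∈ Set.Icc (0:ℝ) 1) :
    dist z (H.W x y l) ≤ max (dist z x) (dist z y) := by
  obtain ⟨hl0, hl1⟩ := hl
  calc dist z (H.W x y l) ≤ (1 - l) * dist z x + l * dist z y := H.W1 x y z l ⟨hl0, hl1⟩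
    _ ≤ (1 - l) * max (dist z x) (dist z y) + l * max (dist z x) (dist z y) :=
      add_le_add (mul_le_mul_of_nonneg_left (le_max_left _ _) (sub_nonneg.2 hl1))
        (mul_le_mul_of_nonneg_left (le_max_right _ _) hl0)
    _ = max (dist z x) (dist z y) := by ring

lemma dist_W_right_le (u x : X) {l : ℝ} (hl : l ∈ Set.Icc (0:ℝ) 1) :
    dist x (H.W u x l) ≤ (1 - l) * dist x u := by
  simpa using H.W1 u x x l hl

lemma mul_dist_self_le {T : X → X} {x y : X} (hT : dist (T x) (T y) ≤ dist x y)
    {l : ℝ} (hl : l ∈ Set.Icc (0:ℝ) 1) :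
    l * dist x (T x) ≤ dist x (H.W y (T y) l) + dist x y := by
  have hW := H.W1 y (T y) (T x) l hl
  have hTy : dist (T x) y ≤ dist x y + dist x (T x) :=
    (dist_triangle_left (T x) y x).trans_eq (add_comm _ _)
  have hx := dist_triangle_right x (T x) (H.W y (T y) l)
  obtain ⟨hl0, hl1⟩ := hl
  nlinarith [mul_le_mul_of_nonneg_left hTy (sub_nonneg.2 hl1), mul_le_mul_of_nonneg_left hT hl0]

end WHyp

section TikhonovMann

variable {X : Type*} [MetricSpace X] (H : WHyp X) {C : Set X} {T : X → X} {u : X}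
  {lam beta : ℕ → ℝ} {x y : ℕ → X}

lemma tikhonovMann_mem
    (hCconv : ∀ x ∈ C, ∀ y ∈ C, ∀ l ∈ Set.Icc (0:ℝ) 1, H.W x y l ∈ C)
    (hTmaps : ∀ x ∈ C, T x ∈ C) (huC : u ∈ C)
    (hlam : ∀ n, lam n ∈ Set.Icc (0:ℝ) 1) (hbeta : ∀ n, beta n ∈ Set.Icc (0:ℝ) 1)
    (hx0 : x 0 ∈ C) (hy : ∀ n, y n = H.W u (x n) (beta n))
    (hx : ∀ n, x (n + 1) = H.W (y n) (T (y n)) (lam n)) (n : ℕ) :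
    x n ∈ C ∧ y n ∈ C := by
  have hyC : ∀ n, x n ∈ C → y n ∈ C := fun n hxn =>
    hy n ▸ hCconv u huC (x n) hxn _ (hbeta n)
  induction n with
  | zero => exact ⟨hx0, hyC 0 hx0⟩
  | succ n ih =>
    have hxn : x (n + 1) ∈ C := hx n ▸ hCconv _ ih.2 _ (hTmaps _ ih.2) _ (hlam n)
    exact ⟨hxn, hyC _ hxn⟩

lemma dist_tikhonovMann_le {p : X} (hTp : ∀ z ∈ C, dist p (T z) ≤ dist p z)
    {R : ℝ} (hx0 : dist p (x 0) ≤ R) (hu : dist p u ≤ R)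
    (hlam : ∀ n, lam n ∈ Set.Icc (0:ℝ) 1) (hbeta : ∀ n, beta n ∈ Set.Icc (0:ℝ) 1)
    (hyC : ∀ n, y n ∈ C) (hy : ∀ n, y n = H.W u (x n) (beta n))
    (hx : ∀ n, x (n + 1) = H.W (y n) (T (y n)) (lam n)) (n : ℕ) :
    dist p (x n) ≤ R := by
  induction n with
  | zero => exact hx0
  | succ n ih =>
    have hyR : dist p (y n) ≤ R :=
      hy n ▸ (H.dist_W_le_max u (x n) p (hbeta n)).trans (max_le hu ih)
    rw [hx n]
    exact (H.dist_W_le_max _ _ p (hlam n)).trans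
      (max_le hyR ((hTp _ (hyC n)).trans hyR))

lemma dist_tikhonovMann_x_y_le {p : X} {R : ℝ} (hR : ∀ n, dist p (x n) ≤ R) (hu : dist p u ≤ R)
    (hbeta : ∀ n, beta n ∈ Set.Icc (0:ℝ) 1) (hy : ∀ n, y n = H.W u (x n) (beta n)) (n : ℕ) :
    dist (x n) (y n) ≤ 2 * R * (1 - beta n) := by
  have hxu : dist (x n) u ≤ 2 * R := by linarith [dist_triangle_left (x n) u p, hR n]
  calc dist (x n) (y n) ≤ (1 - beta n) * dist (x n) u :=
        hy n ▸ H.dist_W_right_le u (x n) (hbeta n)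
    _ ≤ 2 * R * (1 - beta n) := by
      rw [mul_comm]; exact mul_le_mul_of_nonneg_right hxu (sub_nonneg.2 (hbeta n).2)

end TikhonovMann

theorem tm_as_reg_to_T_as_reg
    {X : Type*} [MetricSpace X] (H : WHyp X) (C : Set X)
    (hCconv : ∀ x ∈ C, ∀ y ∈ C, ∀ l ∈ Set.Icc (0:ℝ) 1, H.W x y l ∈ C)
    (T : X → X) (hTmaps : ∀ x ∈ C, T x ∈ C)
    (hTne : ∀ x ∈ C, ∀ y ∈ C, dist (T x) (T y) ≤ dist x y)
    (p : X) (hpC : p ∈ C) (hpfix : T p = p)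
    (u : X) (huC : u ∈ C)
    (lam beta : ℕ → ℝ)
    (hlam : ∀ n, lam n ∈ Set.Icc (0:ℝ) 1) (hbeta : ∀ n, beta n ∈ Set.Icc (0:ℝ) 1)
    (x y : ℕ → X) (hx0 : x 0 ∈ C)
    (hy : ∀ n, y n = H.W u (x n) (beta n))
    (hx : ∀ n, x (n + 1) = H.W (y n) (T (y n)) (lam n))
    (M : ℝ) (hM : M = max (dist (x 0) p) (dist u p))
    (K : ℕ) (hK : M ≤ (K : ℝ))
    (σ₅ : ℕ → ℕ)
    (hσ₅ : ∀ k : ℕ, ∀ n ≥ σ₅ k, |beta n - 1| ≤ 1 / (k + 1))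
    (Λ : ℕ) (hΛ : 1 ≤ Λ) (NΛ : ℕ)
    (hNΛ : ∀ n ≥ NΛ, 1 / (Λ : ℝ) ≤ lam n)
    (Θ : ℕ → ℕ)
    (hΘ : ∀ k : ℕ, ∀ n ≥ Θ k, dist (x n) (x (n + 1)) ≤ 1 / (k + 1))
    (Θs : ℕ → ℕ)
    (hΘs : ∀ k : ℕ,
      Θs k = max NΛ (max (Θ (2 * Λ * (k + 1) - 1)) (σ₅ (4 * K * Λ * (k + 1) - 1)))) :
    ∀ k : ℕ, ∀ n ≥ Θs k, dist (x n) (T (x n)) ≤ 1 / (k + 1) := by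
  intro k n hn
  obtain ⟨hNn, hΘn, hσn⟩ : NΛ ≤ n ∧ Θ (2 * Λ * (k + 1) - 1) ≤ n ∧
      σ₅ (4 * K * Λ * (k + 1) - 1) ≤ n := by
    simpa only [hΘs, ge_iff_le, max_le_iff] using hn
  have hup : dist p u ≤ K := (dist_comm p u).trans_le ((le_max_right _ _).trans (hM ▸ hK))
  have hmem := tikhonovMann_mem H hCconv hTmaps huC hlam hbeta hx0 hy hx
  have hbound : ∀ m, dist p (x m) ≤ K :=
    dist_tikhonovMann_le H (fun z hz => by simpa [hpfix] using hTne p hpC z hz)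
      ((dist_comm p (x 0)).trans_le ((le_max_left _ _).trans (hM ▸ hK))) hup hlam hbeta (fun m => (hmem m).2) hy hx
  have hstep : dist (x n) (x (n + 1)) ≤ 1 / (2 * Λ * (k + 1) : ℕ) :=
    le_one_div_of_rate hΘ (by positivity) hΘn
  have hxy : dist (x n) (y n) ≤ 1 / (2 * Λ * (k + 1) : ℕ) := by
    have hβ : ((2 * K : ℕ) : ℝ) * |beta n - 1| ≤ 1 / (2 * Λ * (k + 1) : ℕ) :=
      mul_le_one_div_of_rate hσ₅ (by positivity) (by convert hσn using 3; ring)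
    rw [abs_sub_comm, abs_of_nonneg (sub_nonneg.2 (hbeta n).2), Nat.cast_mul,
      Nat.cast_ofNat] at hβ
    exact (dist_tikhonovMann_x_y_le H hbound hup hbeta hy n).trans hβ
  have hkey := H.mul_dist_self_le (hTne _ (hmem n).1 _ (hmem n).2) (hlam n)
  rw [← hx n] at hkey
  have hΛlam : 1 ≤ Λ * lam n := by
    have := hNΛ n hNn
    rwa [div_le_iff₀ (by exact_mod_cast hΛ), mul_comm] at this
  calc dist (x n) (T (x n)) ≤ Λ * (lam n * dist (x n) (T (x n))) := by
        rw [← mul_assoc]; exact le_mul_of_one_le_left dist_nonneg hΛlam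
    _ ≤ Λ * (1 / (2 * Λ * (k + 1) : ℕ) + 1 / (2 * Λ * (k + 1) : ℕ)) := by
        gcongr; linarith
    _ = 1 / (k + 1) := by push_cast; field_simp; ring
end
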